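/- arXiv:2603.25362 — 7 statements merged into one kernel-verified Lean document; each statement's English description precedes it below -/
import Mathlib

section
/- Let p be a prime with p ≡ 3 (mod 4) and let a, b be integers with 0 ≤ a, b < p. Then the Mannheim weight of the residue class of a + b·i in ℤ[i]/(p) equals min{a, p−a} + min{b, p−b}, i.e., it equals the sum of the Lee weights of a and b in ℤ_p. -/
open scoped Classical

noncomputable section

/-- The quotient ring `ℤ[i]/(π)`. -/
abbrev GQuot (pi : GaussianInt) : Type := GaussianInt ⧸ Ideal.span {pi}

/-- The quotient map `ℤ[i] → ℤ[i]/(π)`. -/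
def gmk (pi : GaussianInt) : GaussianInt →+* GQuot pi := Ideal.Quotient.mk (Ideal.span {pi})

/-- Mannheim weight of an element of `ℤ[i]/(π)`:
the minimum of `|x| + |y|` over representatives `x + y·i`. -/
def mWt (pi : GaussianInt) (α : GQuot pi) : ℕ :=
  sInf { w : ℕ | ∃ z : GaussianInt, gmk pi z = α ∧ z.re.natAbs + z.im.natAbs = w }

/-- Mannheim weight of a vector: the sum of the Mannheim weights of its coordinates. -/
def mWtVec (pi : GaussianInt) {n : ℕ} (v : Fin n → GQuot pi) : ℕ := ∑ i, mWt pi (v i)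


lemma gmk_eq_iff (p a b : ℕ) (z : GaussianInt) :
    gmk (p : GaussianInt) z = gmk (p : GaussianInt) (⟨(a : ℤ), (b : ℤ)⟩ : GaussianInt) ↔
      (p : ℤ) ∣ (z.re - a) ∧ (p : ℤ) ∣ (z.im - b) := by
  rw [gmk, Ideal.Quotient.eq, Ideal.mem_span_singleton]
  have : ((p : ℤ) : GaussianInt) = (p : GaussianInt) := by push_cast; ring
  rw [← this, Zsqrtd.intCast_dvd]
  simp [Zsqrtd.re_sub, Zsqrtd.im_sub]

lemma lee_le (p a : ℕ) (hp : 0 < p) (ha : a < p) (x : ℤ) (h : (p : ℤ) ∣ (x - a)) :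
    min a (p - a) ≤ x.natAbs := by
  obtain ⟨k, hk⟩ := h
  rcases le_or_gt (p : ℤ) |x| with h' | h'
  · have := Int.abs_eq_natAbs x
    omega
  · have h1 : -(2 * (p : ℤ)) < (p : ℤ) * k := by
      have := abs_lt.mp h'; omega
    have h2 : (p : ℤ) * k < p := by
      have := abs_lt.mp h'; omega
    have hk1 : -2 < k := by
      by_contra hc
      push_neg at hc
      have : (p : ℤ) * k ≤ (p : ℤ) * (-2) := by
        apply mul_le_mul_of_nonneg_left hc (by positivity)
      omega
    have hk2 : k < 1 := by
      by_contra hc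
      push_neg at hc
      have : (p : ℤ) * 1 ≤ (p : ℤ) * k := by
        apply mul_le_mul_of_nonneg_left hc (by positivity)
      omega
    interval_cases k <;> omega

/-- for a prime `p ≡ 3 (mod 4)` and `0 ≤ a, b < p`, the Mannheim weight of the
class of `a + b·i` in `ℤ[i]/(p)` is `min a (p-a) + min b (p-b)`, the sum of Lee weights. -/
theorem stmt0 (p : ℕ) (hp : p.Prime) (h3 : p % 4 = 3) (a b : ℕ) (ha : a < p) (hb : b < p) :
    mWt (p : GaussianInt) (gmk (p : GaussianInt) (⟨(a : ℤ), (b : ℤ)⟩ : GaussianInt))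
      = min a (p - a) + min b (p - b) := by
  have hp0 : 0 < p := hp.pos
  set S := { w : ℕ | ∃ z : GaussianInt, gmk (p : GaussianInt) z =
      gmk (p : GaussianInt) (⟨(a : ℤ), (b : ℤ)⟩ : GaussianInt) ∧
      z.re.natAbs + z.im.natAbs = w } with hS
  have hmem : (min a (p - a) + min b (p - b)) ∈ S := by
    refine ⟨⟨if 2 * a ≤ p then (a : ℤ) else (a : ℤ) - p,
            if 2 * b ≤ p then (b : ℤ) else (b : ℤ) - p⟩, ?_, ?_⟩
    · rw [gmk_eq_iff]
      constructor <;> [skip; skip] <;>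
        · dsimp only
          split <;> simp
    · dsimp only
      split <;> split <;> omega
  have hle : sInf S ≤ min a (p - a) + min b (p - b) := Nat.sInf_le hmem
  have hmem2 : sInf S ∈ S := Nat.sInf_mem ⟨_, hmem⟩
  obtain ⟨z, hz, hw⟩ := hmem2
  rw [gmk_eq_iff] at hz
  have h1 := lee_le p a hp0 ha z.re hz.1
  have h2 := lee_le p b hp0 hb z.im hz.2
  show sInf S = _
  omega
end
end

section
/- Let π = a + b·i ∈ ℤ[i] with 0 < a < b, gcd(a,b) = 1, and p = a² + b² a prime with p ≡ 1 (mod 4), and let 𝔽 = ℤ[i]/(π). Then for all positive integers n ≥ k ≥ 1, d_π(n, k) ≤ d_π(d_H(n, k), 1). -/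
open scoped Classical

noncomputable section

/-- Hamming weight of a vector: the number of nonzero coordinates. -/
def hWtVec {n : ℕ} {F : Type*} [Zero F] (v : Fin n → F) : ℕ :=
  Set.ncard { i : Fin n | v i ≠ 0 }

/-- Minimum Mannheim distance of a linear code (minimum Mannheim weight of a
nonzero codeword). -/
def dPiCode (pi : GaussianInt) {n : ℕ} (C : Submodule (GQuot pi) (Fin n → GQuot pi)) : ℕ :=
  sInf { w : ℕ | ∃ c ∈ C, c ≠ 0 ∧ mWtVec pi c = w }

/-- Minimum Hamming distance of a linear code. -/
def dHCode (pi : GaussianInt) {n : ℕ} (C : Submodule (GQuot pi) (Fin n → GQuot pi)) : ℕ :=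
  sInf { w : ℕ | ∃ c ∈ C, c ≠ 0 ∧ hWtVec c = w }

/-- `dPiMax pi n k`: the maximum minimum Mannheim distance over all `[n,k]` codes. -/
def dPiMax (pi : GaussianInt) (n k : ℕ) : ℕ :=
  sSup { d : ℕ | ∃ C : Submodule (GQuot pi) (Fin n → GQuot pi),
    Module.finrank (GQuot pi) C = k ∧ dPiCode pi C = d }

/-- `dHMax pi n k`: the maximum minimum Hamming distance over all `[n,k]` codes. -/
def dHMax (pi : GaussianInt) (n k : ℕ) : ℕ :=
  sSup { d : ℕ | ∃ C : Submodule (GQuot pi) (Fin n → GQuot pi),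
    Module.finrank (GQuot pi) C = k ∧ dHCode pi C = d }

/-!
Let `c` be a codeword of minimum Hamming weight in an `[n,k]` code `C`. It has at most
`m = d_H(n,k)` nonzero coordinates, so they can be placed, in some order, into a vector `d` of
length `m`. Every multiple `t • d` then has the same Mannheim weight as the codeword `t • c` of
`C`, so the one-dimensional code spanned by `d` has minimum Mannheim distance at least `d_π(C)`.
-/

instance Zsqrtd.isLocalHom_normMonoidHom {d : ℤ} : IsLocalHom (Zsqrtd.normMonoidHom (d := d)) :=
  ⟨fun z hz => (Zsqrtd.isUnit_iff_norm_isUnit z).mpr hz⟩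

theorem Zsqrtd.irreducible_of_prime_norm {d : ℤ} {z : ℤ√d} (h : Prime z.norm) : Irreducible z :=
  Irreducible.of_map (f := Zsqrtd.normMonoidHom) h.irreducible

theorem exists_sum_comp_eq_of_hWtVec_le {F : Type*} [Zero F] {n m : ℕ} {v : Fin n → F}
    (h : hWtVec v ≤ m) :
    ∃ w : Fin m → F, (v ≠ 0 → w ≠ 0) ∧
      ∀ {M : Type*} [AddCommMonoid M] (g : F → M), g 0 = 0 → ∑ j, g (w j) = ∑ i, g (v i) := by
  let S := {i | v i ≠ 0}
  obtain ⟨ι⟩ : Nonempty (S ↪ Fin m) := by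
    refine Function.Embedding.nonempty_of_card_le ?_
    rwa [← Nat.card_eq_fintype_card, Nat.card_coe_set_eq, Fintype.card_fin]
  refine ⟨Function.extend ι (fun i => v i) 0, fun hv hw => hv ?_, fun g hg => ?_⟩
  · funext i
    by_contra hi
    exact hi (by simpa [ι.injective.extend_apply] using congrFun hw (ι ⟨i, hi⟩))
  · symm
    calc ∑ i, g (v i) = ∑ i : S, g (v i) := by
          rw [← Finset.sum_filter_of_ne (p := (· ∈ S)) (fun i _ hi h0 => hi (by simp [h0, hg]))]
          exact Finset.sum_subtype _ (by simp) _
      _ = ∑ j, g (Function.extend ι (fun i => v i) 0 j) :=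
        Fintype.sum_of_injective ι ι.injective _ _
          (fun j hj => by rw [Function.extend_apply' _ _ _ (by simpa using hj), Pi.zero_apply, hg])
          (fun i => by rw [ι.injective.extend_apply])

theorem Nat.sInf_le_of_forall_le {S : Set ℕ} {B : ℕ} (h : ∀ x ∈ S, x ≤ B) : sInf S ≤ B := by
  rcases S.eq_empty_or_nonempty with rfl | hS
  · simp
  · exact h _ (Nat.sInf_mem hS)

section Weights

variable {pi : GaussianInt}

theorem mWt_zero : mWt pi 0 = 0 :=
  Nat.sInf_eq_zero.mpr (Or.inl ⟨0, map_zero _, rfl⟩)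

theorem mWt_le_natAbs_norm (hpi : pi ≠ 0) (α : GQuot pi) : mWt pi α ≤ pi.norm.natAbs := by
  obtain ⟨z, rfl⟩ := Ideal.Quotient.mk_surjective α
  have hrep : gmk pi (z % pi) = Ideal.Quotient.mk _ z := by
    rw [gmk, Ideal.Quotient.mk_eq_mk_iff_sub_mem, EuclideanDomain.mod_eq_sub_mul_div,
      sub_sub_cancel_left]
    exact neg_mem (Ideal.mul_mem_right _ _ (Ideal.mem_span_singleton_self pi))
  calc mWt pi _ ≤ (z % pi).re.natAbs + (z % pi).im.natAbs := Nat.sInf_le ⟨_, hrep, rfl⟩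
    _ ≤ (z % pi).norm.natAbs := by
      rw [GaussianInt.natAbs_norm_eq]; exact add_le_add (Nat.le_mul_self _) (Nat.le_mul_self _)
    _ ≤ pi.norm.natAbs := (GaussianInt.natAbs_norm_mod_lt z hpi).le

theorem mWtVec_le (hpi : pi ≠ 0) {n : ℕ} (v : Fin n → GQuot pi) :
    mWtVec pi v ≤ n * pi.norm.natAbs := by
  simpa [mWtVec] using
    Finset.sum_le_sum fun i (_ : i ∈ Finset.univ) => mWt_le_natAbs_norm hpi (v i)

theorem hWtVec_le {F : Type*} [Zero F] {n : ℕ} (v : Fin n → F) : hWtVec v ≤ n :=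
  (Set.ncard_le_ncard (Set.subset_univ _)).trans (by simp)

end Weights

section Codes

variable {pi : GaussianInt} {n : ℕ}

theorem dPiCode_le_mWtVec {C : Submodule (GQuot pi) (Fin n → GQuot pi)} {c : Fin n → GQuot pi}
    (hc : c ∈ C) (hc0 : c ≠ 0) : dPiCode pi C ≤ mWtVec pi c :=
  Nat.sInf_le ⟨c, hc, hc0, rfl⟩

theorem exists_hWtVec_eq_dHCode {C : Submodule (GQuot pi) (Fin n → GQuot pi)} (hC : C ≠ ⊥) :
    ∃ c ∈ C, c ≠ 0 ∧ hWtVec c = dHCode pi C := by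
  obtain ⟨c, hc, hc0⟩ := (Submodule.ne_bot_iff C).mp hC
  exact Nat.sInf_mem (s := {w | ∃ c ∈ C, c ≠ 0 ∧ hWtVec c = w}) ⟨_, c, hc, hc0, rfl⟩

theorem dHCode_le_dHMax (C : Submodule (GQuot pi) (Fin n → GQuot pi)) :
    dHCode pi C ≤ dHMax pi n (Module.finrank (GQuot pi) C) := by
  refine le_csSup ⟨n, ?_⟩ ⟨C, rfl, rfl⟩
  rintro _ ⟨C', -, rfl⟩
  exact Nat.sInf_le_of_forall_le fun _ ⟨c, _, _, hc⟩ => hc ▸ hWtVec_le c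

theorem dPiCode_le_dPiMax (hpi : pi ≠ 0) (C : Submodule (GQuot pi) (Fin n → GQuot pi)) :
    dPiCode pi C ≤ dPiMax pi n (Module.finrank (GQuot pi) C) := by
  refine le_csSup ⟨n * pi.norm.natAbs, ?_⟩ ⟨C, rfl, rfl⟩
  rintro _ ⟨C', -, rfl⟩
  exact Nat.sInf_le_of_forall_le fun _ ⟨c, _, _, hc⟩ => hc ▸ mWtVec_le hpi c

theorem dPiCode_le_dPiCode_span_singleton [(Ideal.span {pi}).IsPrime] {m : ℕ}
    {C : Submodule (GQuot pi) (Fin n → GQuot pi)} {c : Fin n → GQuot pi} (hc : c ∈ C)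
    (hc0 : c ≠ 0) {d : Fin m → GQuot pi} (hd0 : d ≠ 0)
    (hd : ∀ t : GQuot pi, mWtVec pi (t • d) = mWtVec pi (t • c)) :
    dPiCode pi C ≤ dPiCode pi (Submodule.span (GQuot pi) {d}) := by
  refine le_csInf ⟨_, d, Submodule.mem_span_singleton_self d, hd0, rfl⟩ ?_
  rintro _ ⟨x, hx, hx0, rfl⟩
  obtain ⟨t, rfl⟩ := Submodule.mem_span_singleton.mp hx
  rw [hd]
  exact dPiCode_le_mWtVec (C.smul_mem t hc) (smul_ne_zero (left_ne_zero_of_smul hx0) hc0)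

end Codes

theorem stmt4_general (a b : ℕ)
    (hp : Nat.Prime (a ^ 2 + b ^ 2))
    (pi : GaussianInt) (hpi : pi = (⟨(a : ℤ), (b : ℤ)⟩ : GaussianInt))
    (n k : ℕ) (hk : 1 ≤ k) :
    dPiMax pi n k ≤ dPiMax pi (dHMax pi n k) 1 := by
  have hnorm : pi.norm = ((a ^ 2 + b ^ 2 : ℕ) : ℤ) := by
    rw [hpi, Zsqrtd.norm_def]; push_cast; ring
  have hirr : Irreducible pi :=
    Zsqrtd.irreducible_of_prime_norm (hnorm ▸ Nat.prime_iff_prime_int.mp hp)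
  have := PrincipalIdealRing.isMaximal_of_irreducible hirr
  let _ : Field (GQuot pi) := Ideal.Quotient.field _
  refine csSup_le' ?_
  rintro _ ⟨C, rfl, rfl⟩
  obtain ⟨c, hc, hc0, hcw⟩ := exists_hWtVec_eq_dHCode (C := C) (by rintro rfl; simp at hk)
  obtain ⟨d, hd0, hd⟩ := exists_sum_comp_eq_of_hWtVec_le (hcw.trans_le (dHCode_le_dHMax C))
  calc dPiCode pi C ≤ dPiCode pi (Submodule.span (GQuot pi) {d}) :=
        dPiCode_le_dPiCode_span_singleton hc hc0 (hd0 hc0)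
          fun t => hd (fun x => mWt pi (t * x)) (by rw [mul_zero, mWt_zero])
    _ ≤ dPiMax pi _ 1 :=
        finrank_span_singleton (K := GQuot pi) (hd0 hc0) ▸ dPiCode_le_dPiMax hirr.ne_zero _

/-- `d_π(n,k) ≤ d_π(d_H(n,k), 1)`. -/
theorem stmt4 (a b : ℕ) (ha : 0 < a) (hab : a < b) (hgcd : Nat.gcd a b = 1)
    (hp : Nat.Prime (a ^ 2 + b ^ 2)) (hmod : (a ^ 2 + b ^ 2) % 4 = 1)
    (pi : GaussianInt) (hpi : pi = (⟨(a : ℤ), (b : ℤ)⟩ : GaussianInt))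
    (n k : ℕ) (hk : 1 ≤ k) (hn : k ≤ n) :
    dPiMax pi n k ≤ dPiMax pi (dHMax pi n k) 1 :=
  stmt4_general a b hp pi hpi n k hk
end
end

section
/- Let π = a + b·i ∈ ℤ[i] with 0 < a < b, gcd(a,b) = 1, and p = a² + b² a prime with p ≡ 1 (mod 4), and let 𝔽 = ℤ[i]/(π). Then for all positive integers k, n₁, n₂ with n₁ ≥ k and n₂ ≥ k, one has d_π(n₁ + n₂, k) ≥ d_π(n₁, k) + d_π(n₂, k). -/
open scoped Classical

noncomputable section

/-!
Given codes `C₁ ⊆ 𝔽^n₁` and `C₂ ⊆ 𝔽^n₂` of dimension `k` attaining `d_π(n₁, k)` and `d_π(n₂, k)`,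
choose a linear isomorphism `e : C₁ ≃ C₂`. The code `{(x, e x) | x ∈ C₁} ⊆ 𝔽^(n₁ + n₂)` again has
dimension `k`, and the weight of a nonzero codeword `(x, e x)` is `wt x + wt (e x)`, which is at
least `d(C₁) + d(C₂)`. This works for any coordinatewise weight over any finite field; for
`𝔽 = ℤ[i]/(π)` it only remains to note that `π` has prime norm, hence is irreducible, so that
`𝔽` is a finite field.
-/

open Module

theorem exists_submodule_finrank_eq {F V : Type*} [DivisionRing F] [AddCommGroup V] [Module F V]
    [FiniteDimensional F V] {k : ℕ} (hk : k ≤ finrank F V) :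
    ∃ W : Submodule F V, finrank F W = k := by
  let b := finBasis F V
  refine ⟨Submodule.span F (Set.range (b ∘ Fin.castLE hk)), ?_⟩
  rw [finrank_span_eq_card (b.linearIndependent.comp _ (Fin.castLE_injective hk)),
    Fintype.card_fin]

section MinimumWeight

variable {F : Type*} (wt : F → ℕ)

section Semiring

variable [Semiring F] {n : ℕ}

/-- `0` for the zero code, whose set of nonzero codewords is empty. -/
def minWeight (C : Submodule F (Fin n → F)) : ℕ :=
  sInf {w | ∃ c ∈ C, c ≠ 0 ∧ ∑ i, wt (c i) = w}

def maxMinWeight (n k : ℕ) : ℕ :=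
  sSup {d | ∃ C : Submodule F (Fin n → F), finrank F C = k ∧ minWeight wt C = d}

theorem minWeight_le {C : Submodule F (Fin n → F)} {c : Fin n → F} (hc : c ∈ C) (hc0 : c ≠ 0) :
    minWeight wt C ≤ ∑ i, wt (c i) :=
  Nat.sInf_le ⟨c, hc, hc0, rfl⟩

theorem minWeight_bot : minWeight wt (⊥ : Submodule F (Fin n → F)) = 0 := by
  simp [minWeight]

theorem minWeight_le_mul {B : ℕ} (hB : ∀ x, wt x ≤ B) (C : Submodule F (Fin n → F)) :
    minWeight wt C ≤ n * B := by
  obtain rfl | ⟨c, hc, hc0⟩ := (eq_or_ne C ⊥).imp_right C.ne_bot_iff.mp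
  · simp [minWeight_bot]
  calc minWeight wt C ≤ ∑ i, wt (c i) := minWeight_le wt hc hc0
    _ ≤ ∑ _i : Fin n, B := Finset.sum_le_sum fun i _ => hB (c i)
    _ = n * B := by simp

end Semiring

variable [DivisionRing F]

theorem exists_finrank_eq_minWeight_add_le {n₁ n₂ : ℕ} (C₁ : Submodule F (Fin n₁ → F))
    (C₂ : Submodule F (Fin n₂ → F)) (h : finrank F C₁ = finrank F C₂) :
    ∃ C : Submodule F (Fin (n₁ + n₂) → F), finrank F C = finrank F C₁ ∧
      minWeight wt C₁ + minWeight wt C₂ ≤ minWeight wt C := by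
  let e : C₁ ≃ₗ[F] C₂ := LinearEquiv.ofFinrankEq _ _ h
  let g : C₁ →ₗ[F] Fin (n₁ + n₂) → F :=
    { toFun x := Fin.append (x : Fin n₁ → F) (e x : Fin n₂ → F)
      map_add' x y := by
        ext i; refine Fin.addCases (fun j => ?_) (fun j => ?_) i <;> simp
      map_smul' r x := by
        ext i; refine Fin.addCases (fun j => ?_) (fun j => ?_) i <;> simp }
  have hg : Function.Injective g := fun x y hxy => by
    ext j; simpa [g] using congrFun hxy (Fin.castAdd n₂ j)
  refine ⟨LinearMap.range g, LinearMap.finrank_range_of_inj hg, ?_⟩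
  obtain rfl | ⟨x₀, hx₀, hx₀0⟩ := (eq_or_ne C₁ ⊥).imp_right C₁.ne_bot_iff.mp
  · have hC₂ : C₂ = ⊥ := Submodule.finrank_eq_zero.mp (h ▸ finrank_bot F _)
    simp [hC₂, minWeight_bot]
  have hweight (x : C₁) :
      ∑ i, wt (g x i) = ∑ i, wt ((x : Fin n₁ → F) i) + ∑ i, wt ((e x : Fin n₂ → F) i) := by
    simp [g, Fin.sum_univ_add]
  refine le_csInf ⟨_, g ⟨x₀, hx₀⟩, ⟨_, rfl⟩, (map_ne_zero_iff g hg).mpr (by simpa), rfl⟩ ?_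
  rintro _ ⟨_, ⟨x, rfl⟩, hx, rfl⟩
  replace hx : x ≠ 0 := by rintro rfl; exact hx (map_zero g)
  rw [hweight]
  exact add_le_add (minWeight_le wt x.2 (by simpa)) (minWeight_le wt (e x).2 (by simpa))

theorem maxMinWeight_add_le [Finite F] {k n₁ n₂ : ℕ} (hn₁ : k ≤ n₁) (hn₂ : k ≤ n₂) :
    maxMinWeight wt n₁ k + maxMinWeight wt n₂ k ≤ maxMinWeight wt (n₁ + n₂) k := by
  obtain ⟨B, hB⟩ := (Set.finite_range wt).bddAbove
  have hbdd (n : ℕ) : BddAbove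
      {d | ∃ C : Submodule F (Fin n → F), finrank F C = k ∧ minWeight wt C = d} :=
    ⟨n * B, by rintro _ ⟨C, -, rfl⟩; exact minWeight_le_mul wt (fun x => hB ⟨x, rfl⟩) C⟩
  have hne {n : ℕ} (hn : k ≤ n) :
      {d | ∃ C : Submodule F (Fin n → F), finrank F C = k ∧ minWeight wt C = d}.Nonempty := by
    obtain ⟨C, hC⟩ := exists_submodule_finrank_eq (F := F) (V := Fin n → F) (by simpa)
    exact ⟨_, C, hC, rfl⟩
  obtain ⟨C₁, hC₁, hd₁⟩ := Nat.sSup_mem (hne hn₁) (hbdd n₁)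
  obtain ⟨C₂, hC₂, hd₂⟩ := Nat.sSup_mem (hne hn₂) (hbdd n₂)
  obtain ⟨C, hC, hd⟩ := exists_finrank_eq_minWeight_add_le wt C₁ C₂ (hC₁.trans hC₂.symm)
  calc maxMinWeight wt n₁ k + maxMinWeight wt n₂ k
      = minWeight wt C₁ + minWeight wt C₂ := by rw [maxMinWeight, maxMinWeight, hd₁, hd₂]
    _ ≤ minWeight wt C := hd
    _ ≤ maxMinWeight wt (n₁ + n₂) k := le_csSup (hbdd _) ⟨C, hC.trans hC₁, rfl⟩

end MinimumWeight

theorem Zsqrtd.irreducible_of_natAbs_norm_prime {d : ℤ} {z : ℤ√d} (h : z.norm.natAbs.Prime) :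
    Irreducible z := by
  let f : ℤ√d →* ℕ := Int.natAbsHom.toMonoidHom.comp Zsqrtd.normMonoidHom
  have : IsLocalHom f := ⟨fun x hx => Zsqrtd.norm_eq_one_iff.mp (Nat.isUnit_iff.mp hx)⟩
  exact Irreducible.of_map (f := f) ((Nat.irreducible_iff_nat_prime _).mpr h)

def Zsqrtd.addEquivProd (d : ℤ) : ℤ√d ≃+ ℤ × ℤ where
  toFun z := (z.re, z.im)
  invFun p := ⟨p.1, p.2⟩
  left_inv _ := rfl
  right_inv _ := rfl
  map_add' _ _ := rfl

theorem GaussianInt.finite_quotient {I : Ideal GaussianInt} (hI : I ≠ ⊥) :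
    Finite (GaussianInt ⧸ I) :=
  let e := (Zsqrtd.addEquivProd (-1)).toIntLinearEquiv.symm
  have : Module.Free ℤ GaussianInt := .of_equiv e
  have : Module.Finite ℤ GaussianInt := .equiv e
  Ideal.finiteQuotientOfFreeOfNeBot I hI

theorem stmt5_general (a b : ℕ)
    (hp : Nat.Prime (a ^ 2 + b ^ 2))
    (pi : GaussianInt) (hpi : pi = (⟨(a : ℤ), (b : ℤ)⟩ : GaussianInt))
    (k n₁ n₂ : ℕ) (hn₁ : k ≤ n₁) (hn₂ : k ≤ n₂) :
    dPiMax pi n₁ k + dPiMax pi n₂ k ≤ dPiMax pi (n₁ + n₂) k := by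
  have hirr : Irreducible pi := Zsqrtd.irreducible_of_natAbs_norm_prime <| by
    simpa [hpi, GaussianInt.natAbs_norm_eq, sq] using hp
  have : (Ideal.span {pi}).IsMaximal := PrincipalIdealRing.isMaximal_of_irreducible hirr
  let := Ideal.Quotient.field (Ideal.span {pi})
  have := GaussianInt.finite_quotient (Ideal.span_singleton_eq_bot.not.mpr hirr.ne_zero)
  -- `dPiMax pi` unfolds to `maxMinWeight (mWt pi)` over the field `GQuot pi`.
  exact maxMinWeight_add_le (mWt pi) hn₁ hn₂

/-- `d_π(n₁ + n₂, k) ≥ d_π(n₁, k) + d_π(n₂, k)`. -/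
theorem stmt5 (a b : ℕ) (ha : 0 < a) (hab : a < b) (hgcd : Nat.gcd a b = 1)
    (hp : Nat.Prime (a ^ 2 + b ^ 2)) (hmod : (a ^ 2 + b ^ 2) % 4 = 1)
    (pi : GaussianInt) (hpi : pi = (⟨(a : ℤ), (b : ℤ)⟩ : GaussianInt))
    (k n₁ n₂ : ℕ) (hk : 1 ≤ k) (hn₁ : k ≤ n₁) (hn₂ : k ≤ n₂) :
    dPiMax pi n₁ k + dPiMax pi n₂ k ≤ dPiMax pi (n₁ + n₂) k :=
  stmt5_general a b hp pi hpi k n₁ n₂ hn₁ hn₂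
end
end

section
/- Let π = 2 + 3i ∈ ℤ[i], so that 𝔽 = ℤ[i]/(π) is a field with 13 elements. For every positive integer n, d_π(n, 1) = 2n − ⌈n/3⌉, where d_π(n, 1) is the maximum over nonzero vectors v ∈ 𝔽^n of the minimum over nonzero scalars λ ∈ 𝔽 of wt_π(λ·v). -/
open scoped Classical

noncomputable section

/-- `dPi1 pi n`: the maximum over nonzero vectors `v ∈ 𝔽^n` of the minimum over nonzero
scalars `λ` of the Mannheim weight of `λ • v` (i.e. `d_π(n,1)`). -/
def dPi1 (pi : GaussianInt) (n : ℕ) : ℕ :=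
  sSup { d : ℕ | ∃ v : Fin n → GQuot pi, v ≠ 0 ∧
    sInf { w : ℕ | ∃ l : GQuot pi, l ≠ 0 ∧ mWtVec pi (l • v) = w } = d }

/-! ### Auxiliary development for `π = 2 + 3i` -/

abbrev p13 : GaussianInt := ⟨2, 3⟩

def eZ : GaussianInt →+* ZMod 13 := Zsqrtd.lift ⟨8, by decide⟩

lemma eZ_apply (z : GaussianInt) : eZ z = (z.re : ZMod 13) + z.im * 8 := by
  simp [eZ]

lemma eZ_p13 : eZ p13 = 0 := by rw [eZ_apply]; decide

lemma irr13 : Irreducible p13 := by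
  constructor
  · rw [← Zsqrtd.norm_eq_one_iff]; decide
  · intro a b hab
    have h : a.norm.natAbs * b.norm.natAbs = 13 := by
      rw [← Int.natAbs_mul, ← Zsqrtd.norm_mul, ← hab]; decide
    have h13 : Nat.Prime 13 := by norm_num
    rcases h13.eq_one_or_self_of_dvd a.norm.natAbs ⟨_, h.symm⟩ with h1 | h1
    · exact Or.inl (Zsqrtd.norm_eq_one_iff.mp h1)
    · exact Or.inr (Zsqrtd.norm_eq_one_iff.mp (by rw [h1] at h; omega))

instance : Nontrivial (ZMod 13) := ⟨0, 1, by decide⟩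

instance : (Ideal.span {p13}).IsMaximal := PrincipalIdealRing.isMaximal_of_irreducible irr13
instance : Field (GQuot p13) := Ideal.Quotient.field _

def eF : GQuot p13 →+* ZMod 13 :=
  Ideal.Quotient.lift _ eZ (by
    intro a ha
    rw [Ideal.mem_span_singleton] at ha
    obtain ⟨c, rfl⟩ := ha
    rw [map_mul, eZ_p13, zero_mul])

lemma eF_mk (z : GaussianInt) : eF (gmk p13 z) = (z.re : ZMod 13) + z.im * 8 := by
  rw [← eZ_apply]; rfl

lemma eF_inj : Function.Injective eF := eF.injective

lemma eF_surj : Function.Surjective eF := fun a =>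
  ⟨gmk p13 ((a.val : ℕ) : GaussianInt), by
    have h := map_natCast (eF.comp (gmk p13)) a.val
    rw [RingHom.comp_apply] at h
    rw [h]
    exact ZMod.natCast_rightInverse a⟩

lemma key (z : GaussianInt) (α : GQuot p13) :
    gmk p13 z = α ↔ (z.re : ZMod 13) + z.im * 8 = eF α :=
  ⟨fun h => by rw [← h, eF_mk], fun h => eF_inj (by rw [eF_mk, h])⟩

/-- Weight function on `ZMod 13`. -/
def u (a : ZMod 13) : ℕ :=
  if a = 0 then 0 else if a = 1 ∨ a = 5 ∨ a = 8 ∨ a = 12 then 1 else 2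

/-- Minimal-weight representatives. -/
def zr (a : ZMod 13) : GaussianInt :=
  match a.val with
  | 1 => ⟨1,0⟩ | 2 => ⟨2,0⟩ | 3 => ⟨0,2⟩ | 4 => ⟨-1,-1⟩ | 5 => ⟨0,-1⟩ | 6 => ⟨1,-1⟩
  | 7 => ⟨-1,1⟩ | 8 => ⟨0,1⟩ | 9 => ⟨1,1⟩ | 10 => ⟨0,-2⟩ | 11 => ⟨-2,0⟩ | 12 => ⟨-1,0⟩
  | _ => 0

lemma H1 : ∀ a : ZMod 13, ((zr a).re : ZMod 13) + (zr a).im * 8 = a := by decide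
lemma H2 : ∀ a : ZMod 13, (zr a).re.natAbs + (zr a).im.natAbs = u a := by decide

lemma mWt_eq (α : GQuot p13) : mWt p13 α = u (eF α) := by
  have hmem : u (eF α) ∈
      { w : ℕ | ∃ z : GaussianInt, gmk p13 z = α ∧ z.re.natAbs + z.im.natAbs = w } :=
    ⟨zr (eF α), (key _ _).mpr (H1 (eF α)), H2 (eF α)⟩
  refine le_antisymm (Nat.sInf_le hmem) ?_
  have hLB : ∀ w ∈ { w : ℕ | ∃ z : GaussianInt, gmk p13 z = α ∧ z.re.natAbs + z.im.natAbs = w },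
      u (eF α) ≤ w := by
    rintro w ⟨z, hz, rfl⟩
    by_contra hlt
    push_neg at hlt
    have h2 : u (eF α) ≤ 2 := by unfold u; split <;> [omega; (split <;> omega)]
    have hez := (key z α).mp hz
    have hsum : z.re.natAbs + z.im.natAbs = 0 ∨ z.re.natAbs + z.im.natAbs = 1 := by omega
    rcases hsum with h0 | h1
    · have hre : z.re = 0 := by omega
      have him : z.im = 0 := by omega
      rw [hre, him] at hez
      have ha0 : eF α = 0 := by rw [← hez]; norm_num
      rw [ha0] at hlt
      have : u 0 = 0 := by decide
      omega
    · have hc : (z.re = 1 ∧ z.im = 0) ∨ (z.re = -1 ∧ z.im = 0) ∨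
          (z.re = 0 ∧ z.im = 1) ∨ (z.re = 0 ∧ z.im = -1) := by omega
      have h14 : eF α = 1 ∨ eF α = 5 ∨ eF α = 8 ∨ eF α = 12 := by
        rcases hc with ⟨h, h'⟩ | ⟨h, h'⟩ | ⟨h, h'⟩ | ⟨h, h'⟩ <;> rw [h, h'] at hez <;>
          rw [← hez] <;> decide
      have : u (eF α) = 1 := by
        unfold u
        rcases h14 with h | h | h | h <;> rw [h] <;> decide
      omega
  exact hLB _ (Nat.sInf_mem ⟨_, hmem⟩)

/-- Weight of `μ • x` over `ZMod 13`. -/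
def Wv {n : ℕ} (μ : ZMod 13) (x : Fin n → ZMod 13) : ℕ := ∑ i, u (μ * x i)

lemma mWtVec_smul {n : ℕ} (l : GQuot p13) (v : Fin n → GQuot p13) :
    mWtVec p13 (l • v) = Wv (eF l) (fun i => eF (v i)) := by
  unfold mWtVec Wv
  refine Finset.sum_congr rfl fun i _ => ?_
  rw [mWt_eq]
  congr 1
  show eF (l * v i) = eF l * eF (v i)
  rw [map_mul]

lemma Pfact : ∀ μ a : ZMod 13, μ ≠ 0 →
    u (μ * a) + (if u (μ * a) = 1 then 1 else 0) = 2 * (if a = 0 then 0 else 1) := by decide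

lemma Qfact : ∀ a : ZMod 13,
    (∑ μ : ZMod 13, if μ = 0 then 0 else if u (μ * a) = 1 then 1 else 0) =
      4 * (if a = 0 then 0 else 1) := by decide

lemma claimA {n : ℕ} (x : Fin n → ZMod 13) (hx : ∃ i, x i ≠ 0) :
    ∃ μ : ZMod 13, μ ≠ 0 ∧ Wv μ x ≤ 2 * n - (n + 2) / 3 := by
  set S : ℕ := ∑ i, (if x i = 0 then 0 else 1) with hS
  set N : ZMod 13 → ℕ := fun μ => ∑ i, (if u (μ * x i) = 1 then 1 else 0) with hN
  have hA1 : ∀ μ : ZMod 13, μ ≠ 0 → Wv μ x + N μ = 2 * S := by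
    intro μ hμ
    rw [hS, hN]
    unfold Wv
    rw [← Finset.sum_add_distrib, Finset.mul_sum]
    exact Finset.sum_congr rfl fun i _ => Pfact μ (x i) hμ
  have hA2 : (∑ μ : ZMod 13, if μ = 0 then 0 else N μ) = 4 * S := by
    have step : (∑ μ : ZMod 13, if μ = 0 then 0 else N μ)
        = ∑ μ : ZMod 13, ∑ i, (if μ = 0 then 0 else if u (μ * x i) = 1 then 1 else 0) := by
      refine Finset.sum_congr rfl fun μ _ => ?_
      by_cases h : μ = 0 <;> simp [h, hN]
    rw [step, Finset.sum_comm, hS, Finset.mul_sum]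
    exact Finset.sum_congr rfl fun i _ => Qfact (x i)
  have hS1 : 1 ≤ S := by
    obtain ⟨i, hi⟩ := hx
    calc 1 = (if x i = 0 then 0 else 1) := by simp [hi]
    _ ≤ S := Finset.single_le_sum (f := fun i => if x i = 0 then 0 else 1)
        (fun _ _ => Nat.zero_le _) (Finset.mem_univ i)
  have hSn : S ≤ n := by
    calc S ≤ ∑ _i : Fin n, 1 := Finset.sum_le_sum (fun i _ => by split <;> omega)
    _ = n := by simp
  by_contra hcon
  push_neg at hcon
  have hNle : ∀ μ : ZMod 13, μ ≠ 0 → N μ ≤ (S + 2) / 3 - 1 := by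
    intro μ hμ
    have h1 := hA1 μ hμ
    have h2 := hcon μ hμ
    omega
  have hbound : (∑ μ : ZMod 13, if μ = 0 then 0 else N μ)
      ≤ ∑ μ : ZMod 13, (if μ = 0 then 0 else ((S + 2) / 3 - 1)) := by
    refine Finset.sum_le_sum fun μ _ => ?_
    by_cases h : μ = 0
    · simp [h]
    · simpa [h] using hNle μ h
  have h12 : (∑ μ : ZMod 13, (if μ = 0 then 0 else ((S + 2) / 3 - 1)))
      = 12 * ((S + 2) / 3 - 1) := by
    have e : ∀ μ : ZMod 13, (if μ = 0 then (0:ℕ) else ((S + 2) / 3 - 1))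
        = (if μ = 0 then 0 else 1) * ((S + 2) / 3 - 1) := fun μ => by split <;> ring
    rw [Finset.sum_congr rfl fun μ _ => e μ, ← Finset.sum_mul]
    have : (∑ μ : ZMod 13, if μ = 0 then (0:ℕ) else 1) = 12 := by decide
    rw [this]
  rw [hA2] at hbound
  rw [h12] at hbound
  omega

lemma sumL (w : ℕ → ℕ) : ∀ n : ℕ, (∑ i : Fin n, w ((i : ℕ) % 3))
    = (n + 2) / 3 * w 0 + (n + 1) / 3 * w 1 + n / 3 * w 2 := by
  intro n
  induction n with
  | zero => simp
  | succ n ih =>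
    rw [Fin.sum_univ_castSucc]
    simp only [Fin.coe_castSucc, Fin.val_last]
    rw [ih]
    have h3 : n % 3 = 0 ∨ n % 3 = 1 ∨ n % 3 = 2 := by omega
    rcases h3 with h | h | h
    · obtain ⟨k, rfl⟩ : ∃ k, n = 3 * k := ⟨n / 3, by omega⟩
      rw [show 3 * k % 3 = 0 from by omega,
        show (3 * k + 2) / 3 = k from by omega,
        show (3 * k + 1) / 3 = k from by omega,
        show 3 * k / 3 = k from by omega,
        show (3 * k + 1 + 2) / 3 = k + 1 from by omega]
      ring
    · obtain ⟨k, rfl⟩ : ∃ k, n = 3 * k + 1 := ⟨n / 3, by omega⟩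
      rw [show (3 * k + 1) % 3 = 1 from by omega,
        show (3 * k + 1 + 2) / 3 = k + 1 from by omega,
        show (3 * k + 1 + 1) / 3 = k from by omega,
        show (3 * k + 1) / 3 = k from by omega,
        show (3 * k + 1 + 1 + 2) / 3 = k + 1 from by omega]
      ring
    · obtain ⟨k, rfl⟩ : ∃ k, n = 3 * k + 2 := ⟨n / 3, by omega⟩
      rw [show (3 * k + 2) % 3 = 2 from by omega,
        show (3 * k + 2 + 2) / 3 = k + 1 from by omega,
        show (3 * k + 2 + 1) / 3 = k + 1 from by omega,
        show (3 * k + 2) / 3 = k from by omega,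
        show (3 * k + 2 + 1 + 2) / 3 = k + 1 from by omega]
      ring

lemma D1 : ∀ μ : ZMod 13, μ ≠ 0 →
    (u (μ * 2 ^ 0) = 1 ∧ u (μ * 2 ^ 1) = 2 ∧ u (μ * 2 ^ 2) = 2) ∨
    (u (μ * 2 ^ 0) = 2 ∧ u (μ * 2 ^ 1) = 1 ∧ u (μ * 2 ^ 2) = 2) ∨
    (u (μ * 2 ^ 0) = 2 ∧ u (μ * 2 ^ 1) = 2 ∧ u (μ * 2 ^ 2) = 1) := by decide

lemma claimB1 {n : ℕ} (μ : ZMod 13) (hμ : μ ≠ 0) :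
    2 * n - (n + 2) / 3 ≤ Wv μ (fun i : Fin n => (2 : ZMod 13) ^ ((i : ℕ) % 3)) := by
  have hL := sumL (fun j => u (μ * 2 ^ j)) n
  have : Wv μ (fun i : Fin n => (2 : ZMod 13) ^ ((i : ℕ) % 3))
      = (n + 2) / 3 * u (μ * 2 ^ 0) + (n + 1) / 3 * u (μ * 2 ^ 1) + n / 3 * u (μ * 2 ^ 2) := hL
  rw [this]
  rcases D1 μ hμ with ⟨e0, e1, e2⟩ | ⟨e0, e1, e2⟩ | ⟨e0, e1, e2⟩ <;> rw [e0, e1, e2] <;> omega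

lemma claimB2 {n : ℕ} :
    Wv 1 (fun i : Fin n => (2 : ZMod 13) ^ ((i : ℕ) % 3)) = 2 * n - (n + 2) / 3 := by
  have hL := sumL (fun j => u (1 * 2 ^ j)) n
  have : Wv 1 (fun i : Fin n => (2 : ZMod 13) ^ ((i : ℕ) % 3))
      = (n + 2) / 3 * u (1 * 2 ^ 0) + (n + 1) / 3 * u (1 * 2 ^ 1) + n / 3 * u (1 * 2 ^ 2) := hL
  rw [this, show u ((1 : ZMod 13) * 2 ^ 0) = 1 from by decide,
    show u ((1 : ZMod 13) * 2 ^ 1) = 2 from by decide,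
    show u ((1 : ZMod 13) * 2 ^ 2) = 2 from by decide]
  clear this hL
  rcases (show n % 3 = 0 ∨ n % 3 = 1 ∨ n % 3 = 2 by omega) with h | h | h <;>
    [(obtain ⟨k, rfl⟩ : ∃ k, n = 3 * k := ⟨n / 3, by omega⟩);
     (obtain ⟨k, rfl⟩ : ∃ k, n = 3 * k + 1 := ⟨n / 3, by omega⟩);
     (obtain ⟨k, rfl⟩ : ∃ k, n = 3 * k + 2 := ⟨n / 3, by omega⟩)] <;> omega

lemma ceil3 (m : ℕ) : ⌈(m : ℚ) / 3⌉₊ = (m + 2) / 3 := by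
  rcases Nat.eq_zero_or_pos m with rfl | hm
  · simp
  · have h3 : (0 : ℚ) < 3 := by norm_num
    rw [Nat.ceil_eq_iff (by omega)]
    constructor
    · rw [lt_div_iff₀ h3]
      have : ((m + 2) / 3 - 1) * 3 < m := by omega
      calc ((((m + 2) / 3 - 1 : ℕ)) : ℚ) * 3 = (((m + 2) / 3 - 1) * 3 : ℕ) := by push_cast; ring
      _ < m := by exact_mod_cast Nat.cast_lt.mpr this
    · rw [div_le_iff₀ h3]
      have : m ≤ ((m + 2) / 3) * 3 := by omega
      calc (m : ℚ) ≤ (((m + 2) / 3 * 3 : ℕ) : ℚ) := by exact_mod_cast this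
      _ = ((m + 2) / 3 : ℕ) * 3 := by push_cast; ring

/-- for `π = 2 + 3i` (so `𝔽 ≅ 𝔽₁₃`), `d_π(n,1) = 2n - ⌈n/3⌉`. -/
theorem stmt8 (n : ℕ) (hn : 0 < n) :
    dPi1 (⟨2, 3⟩ : GaussianInt) n = 2 * n - ⌈(n : ℚ) / 3⌉₊ := by
  rw [ceil3]
  show dPi1 p13 n = 2 * n - (n + 2) / 3
  set m := 2 * n - (n + 2) / 3 with hm
  -- the witness vector
  set v : Fin n → GQuot p13 := fun i => gmk p13 ((⟨2, 0⟩ : GaussianInt) ^ ((i : ℕ) % 3)) with hv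
  have hx : ∀ i : Fin n, eF (v i) = (2 : ZMod 13) ^ ((i : ℕ) % 3) := by
    intro i
    rw [hv]
    simp only [map_pow]
    rw [eF_mk]
    norm_num
  have hvne : v ≠ 0 := by
    intro h
    have h0 := congrFun h ⟨0, hn⟩
    have : eF (v ⟨0, hn⟩) = eF 0 := by rw [h0]; rfl
    rw [hx, map_zero] at this
    simp at this
  have hxfun : (fun i => eF (v i)) = (fun i : Fin n => (2 : ZMod 13) ^ ((i : ℕ) % 3)) :=
    funext hx
  apply IsGreatest.csSup_eq
  constructor
  · -- m is attained by v
    refine ⟨v, hvne, ?_⟩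
    apply IsLeast.csInf_eq
    constructor
    · exact ⟨1, one_ne_zero, by rw [mWtVec_smul, map_one, hxfun, claimB2]⟩
    · rintro w ⟨l, hl, rfl⟩
      rw [mWtVec_smul, hxfun]
      apply claimB1
      intro h
      exact hl (eF_inj (by rw [h, map_zero]))
  · -- m is an upper bound
    rintro d ⟨v', hv', rfl⟩
    obtain ⟨j, hj⟩ : ∃ j, v' j ≠ 0 := by
      by_contra h
      push_neg at h
      exact hv' (funext h)
    have hxj : eF (v' j) ≠ 0 := fun h => hj (eF_inj (by rw [h, map_zero]))
    obtain ⟨μ, hμ, hWle⟩ := claimA (fun i => eF (v' i)) ⟨j, hxj⟩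
    obtain ⟨l, hl⟩ := eF_surj μ
    have hlne : l ≠ 0 := by
      intro h
      rw [h, map_zero] at hl
      exact hμ hl.symm
    have hmem : Wv μ (fun i => eF (v' i)) ∈
        { w : ℕ | ∃ l : GQuot p13, l ≠ 0 ∧ mWtVec p13 (l • v') = w } :=
      ⟨l, hlne, by rw [mWtVec_smul, hl]⟩
    exact le_trans (Nat.sInf_le hmem) hWle
end
end

section
/- Let π = 1 + 4i ∈ ℤ[i], so that 𝔽 = ℤ[i]/(π) is a field with 17 elements. Let n = 4s + t with s ≥ 0 and 0 < t < 4. Then 8s + 2t − 1 ≤ d_π(n, 1) ≤ 8s + 2t, where d_π(n, 1) is the maximum over nonzero vectors v ∈ 𝔽^n of the minimum over nonzero scalars λ ∈ 𝔽 of wt_π(λ·v). -/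
open scoped Classical

noncomputable section

/-!
Sending `i` to `4` identifies `ℤ[i]/(1 + 4i)` with `ℤ/17`, where the Mannheim weight becomes an
explicit table. For every nonzero `c` the weights of `c, 3c, 9c, 27c` sum to exactly `8`.
Averaging over the scalars `1, 3, 9, 27` therefore gives every vector of length `n` a nonzero
multiple of weight at most `2n`. Conversely, every nonzero multiple of `(1, 3, 9, 27, 1, 3, …)`
has weight `8` on each complete block of four coordinates, and its last `r < 4` coordinates
contribute at least `2r - 1`.
-/

open Finset

theorem exists_mem_card_mul_sum_le {ι κ R : Type*} [Fintype ι] [Mul R] (wt : R → ℕ)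
    {s : Finset κ} (hs : s.Nonempty) (a : κ → R) {W : ℕ} (hW : ∀ c, ∑ k ∈ s, wt (a k * c) ≤ W)
    (v : ι → R) : ∃ k ∈ s, #s * ∑ i, wt (a k * v i) ≤ W * Fintype.card ι := by
  refine exists_le_of_sum_le hs ?_
  calc ∑ k ∈ s, #s * ∑ i, wt (a k * v i)
      = #s * ∑ i, ∑ k ∈ s, wt (a k * v i) := by rw [← mul_sum, sum_comm]
    _ ≤ #s * ∑ _i : ι, W := by gcongr with i; exact hW (v i)
    _ = ∑ _k ∈ s, W * Fintype.card ι := by simp [mul_comm]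

theorem sum_range_mul_add_mod {M : Type*} [AddCommMonoid M] (f : ℕ → M) (p q : ℕ) {r : ℕ}
    (hr : r ≤ p) :
    ∑ i ∈ range (p * q + r), f (i % p) = q • ∑ j ∈ range p, f j + ∑ j ∈ range r, f j := by
  have hblock : ∀ q, ∀ j < p, (p * q + j) % p = j := fun q j hj => by
    rw [mul_comm, Nat.mul_add_mod_of_lt hj]
  have hfull : ∀ q, ∑ i ∈ range (p * q), f (i % p) = q • ∑ j ∈ range p, f j := by
    intro q
    induction q with
    | zero => simp
    | succ q ih =>
      rw [mul_add_one, sum_range_add, ih, succ_nsmul]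
      congr 1
      exact sum_congr rfl fun j hj => by rw [hblock q j (mem_range.mp hj)]
  rw [sum_range_add, hfull]
  congr 1
  exact sum_congr rfl fun j hj => by rw [hblock q j ((mem_range.mp hj).trans_le hr)]

theorem sInf_mWtVec_smul_le {π : GaussianInt} {n B : ℕ} {v : Fin n → GQuot π}
    (h : ∃ l : GQuot π, l ≠ 0 ∧ mWtVec π (l • v) ≤ B) :
    sInf {w | ∃ l : GQuot π, l ≠ 0 ∧ mWtVec π (l • v) = w} ≤ B := by
  obtain ⟨l, hl, hB⟩ := h
  exact le_trans (Nat.sInf_le ⟨l, hl, rfl⟩) hB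

theorem dPi1_le {π : GaussianInt} {n B : ℕ}
    (h : ∀ v : Fin n → GQuot π, ∃ l : GQuot π, l ≠ 0 ∧ mWtVec π (l • v) ≤ B) : dPi1 π n ≤ B :=
  csSup_le' <| by
    rintro d ⟨v, -, rfl⟩
    exact sInf_mWtVec_smul_le (h v)

theorem le_dPi1 {π : GaussianInt} {n B d : ℕ}
    (hB : ∀ v : Fin n → GQuot π, ∃ l : GQuot π, l ≠ 0 ∧ mWtVec π (l • v) ≤ B)
    {v : Fin n → GQuot π} (hv : v ≠ 0) (hd : ∀ l : GQuot π, l ≠ 0 → d ≤ mWtVec π (l • v)) :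
    d ≤ dPi1 π n := by
  obtain ⟨i, hi⟩ := Function.ne_iff.mp hv
  have : Nontrivial (GQuot π) := nontrivial_of_ne _ _ hi
  have hbdd : BddAbove {d | ∃ v : Fin n → GQuot π, v ≠ 0 ∧
      sInf {w | ∃ l : GQuot π, l ≠ 0 ∧ mWtVec π (l • v) = w} = d} := by
    refine ⟨B, ?_⟩
    rintro d ⟨v, -, rfl⟩
    exact sInf_mWtVec_smul_le (hB v)
  refine le_trans ?_ (le_csSup hbdd ⟨v, hv, rfl⟩)
  refine le_csInf ⟨_, 1, one_ne_zero, rfl⟩ ?_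
  rintro w ⟨l, hl, rfl⟩
  exact hd l hl

section QuotientOneAddMulI

theorem intCast_mul_self_eq_neg_one (k : ℤ) {m : ℕ} (hm : (m : ℤ) = k ^ 2 + 1) :
    (k : ZMod m) * k = -1 := by
  have h0 : ((k ^ 2 + 1 : ℤ) : ZMod m) = 0 := by rw [← hm, Int.cast_natCast, ZMod.natCast_self]
  push_cast at h0
  linear_combination h0

variable (k : ℤ) {m : ℕ} (hm : (m : ℤ) = k ^ 2 + 1)

def gaussianIntEval : GaussianInt →+* ZMod m :=
  Zsqrtd.lift ⟨k, by simpa using intCast_mul_self_eq_neg_one k hm⟩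

theorem gaussianIntEval_apply (z : GaussianInt) :
    gaussianIntEval k hm z = z.re + z.im * k :=
  Zsqrtd.lift_apply_apply _ _

theorem gaussianIntEval_surjective : Function.Surjective (gaussianIntEval k hm) := by
  intro c
  obtain ⟨x, rfl⟩ := ZMod.intCast_surjective c
  exact ⟨⟨x, 0⟩, by simp [gaussianIntEval_apply]⟩

theorem ker_gaussianIntEval :
    RingHom.ker (gaussianIntEval k hm) = Ideal.span {(⟨1, k⟩ : GaussianInt)} := by
  ext z
  rw [RingHom.mem_ker, Ideal.mem_span_singleton, gaussianIntEval_apply]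
  constructor
  · intro hz
    obtain ⟨q, hq⟩ : (m : ℤ) ∣ z.re + z.im * k :=
      (ZMod.intCast_zmod_eq_zero_iff_dvd _ m).mp (by push_cast; exact hz)
    refine ⟨⟨q, z.im - k * q⟩, ?_⟩
    ext
    · simp only [Zsqrtd.re_mul]
      linear_combination hq + q * hm
    · simp only [Zsqrtd.im_mul]
      ring
  · rintro ⟨w, rfl⟩
    rw [← gaussianIntEval_apply k hm, map_mul, gaussianIntEval_apply k hm ⟨1, k⟩,
      Int.cast_one, intCast_mul_self_eq_neg_one k hm, add_neg_cancel, zero_mul]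

def quotEquivZMod : GQuot ⟨1, k⟩ ≃+* ZMod m :=
  (Ideal.quotEquivOfEq (ker_gaussianIntEval k hm).symm).trans
    (RingHom.quotientKerEquivOfSurjective (gaussianIntEval_surjective k hm))

theorem quotEquivZMod_gmk (z : GaussianInt) :
    quotEquivZMod k hm (gmk _ z) = gaussianIntEval k hm z := by
  simp only [quotEquivZMod, gmk, RingEquiv.trans_apply, Ideal.quotEquivOfEq_mk,
    RingHom.quotientKerEquivOfSurjective_apply_mk]

end QuotientOneAddMulI

local notation "𝔽" => GQuot (⟨1, 4⟩ : GaussianInt)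

def equivZMod17 : 𝔽 ≃+* ZMod 17 := quotEquivZMod 4 (by norm_num)

/-- `mWt` transported to `ℤ/17` (where `i = 4`), listed by residue. -/
def wt17 (c : ZMod 17) : ℕ := ![0, 1, 2, 2, 1, 2, 3, 3, 2, 2, 3, 3, 2, 1, 2, 2, 1] c

theorem wt17_le_natAbs_add_natAbs (x y : ℤ) : wt17 (x + y * 4) ≤ x.natAbs + y.natAbs := by
  have hsmall : ∀ x ∈ Icc (-2 : ℤ) 2, ∀ y ∈ Icc (-2 : ℤ) 2,
      wt17 ((x + y * 4 : ℤ) : ZMod 17) ≤ x.natAbs + y.natAbs := by decide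
  by_cases h : 3 ≤ x.natAbs + y.natAbs
  · have hle : ∀ c : ZMod 17, wt17 c ≤ 3 := by decide
    exact (hle _).trans h
  · simpa using hsmall x (by simp only [mem_Icc]; omega) y (by simp only [mem_Icc]; omega)

theorem exists_natAbs_add_natAbs_eq_wt17 (c : ZMod 17) :
    ∃ x y : ℤ, (x + y * 4 : ZMod 17) = c ∧ x.natAbs + y.natAbs = wt17 c := by
  have hrep : ∀ c : ZMod 17, ∃ x ∈ Icc (-2 : ℤ) 2, ∃ y ∈ Icc (-2 : ℤ) 2,
      ((x + y * 4 : ℤ) : ZMod 17) = c ∧ x.natAbs + y.natAbs = wt17 c := by decide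
  obtain ⟨x, -, y, -, hc, hw⟩ := hrep c
  exact ⟨x, y, by simpa using hc, hw⟩

theorem equivZMod17_gmk (z : GaussianInt) : equivZMod17 (gmk _ z) = z.re + z.im * 4 := by
  rw [equivZMod17, quotEquivZMod_gmk, gaussianIntEval_apply, Int.cast_ofNat]

theorem mWt_eq_wt17 (α : 𝔽) : mWt _ α = wt17 (equivZMod17 α) := by
  obtain ⟨z, rfl⟩ := Ideal.Quotient.mk_surjective α
  change mWt _ (gmk _ z) = wt17 (equivZMod17 (gmk _ z))
  apply le_antisymm
  · obtain ⟨x, y, hxy, hw⟩ := exists_natAbs_add_natAbs_eq_wt17 (equivZMod17 (gmk _ z))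
    refine Nat.sInf_le ⟨⟨x, y⟩, equivZMod17.injective ?_, hw⟩
    rw [← hxy, equivZMod17_gmk]
  · refine le_csInf ⟨_, z, rfl, rfl⟩ ?_
    rintro w ⟨z', hz', rfl⟩
    rw [← hz', equivZMod17_gmk]
    exact wt17_le_natAbs_add_natAbs _ _

theorem three_pow_ne_zero (j : ℕ) : (3 : 𝔽) ^ j ≠ 0 := by
  rw [← equivZMod17.map_ne_zero_iff, map_pow, map_ofNat]
  have h3 : (3 : ZMod 17) ≠ 0 := by decide
  have : Fact (Nat.Prime 17) := ⟨by norm_num⟩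
  exact pow_ne_zero j h3

theorem sum_mWt_three_pow_mul {c : 𝔽} (hc : c ≠ 0) :
    ∑ j ∈ range 4, mWt _ (3 ^ j * c) = 8 := by
  have h : ∀ c : ZMod 17, c ≠ 0 → ∑ j ∈ range 4, wt17 (3 ^ j * c) = 8 := by decide
  simpa only [mWt_eq_wt17, map_mul, map_pow, map_ofNat] using
    h _ (equivZMod17.map_ne_zero_iff.mpr hc)

theorem sum_mWt_three_pow_mul_le (c : 𝔽) : ∑ j ∈ range 4, mWt _ (3 ^ j * c) ≤ 8 := by
  rcases eq_or_ne c 0 with rfl | hc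
  · simp [mWt_eq_wt17, wt17]
  · exact (sum_mWt_three_pow_mul hc).le

theorem two_mul_le_sum_mWt_three_pow_mul_add_one {c : 𝔽} (hc : c ≠ 0) {r : ℕ} (hr : r < 4) :
    2 * r ≤ ∑ j ∈ range r, mWt _ (3 ^ j * c) + 1 := by
  have h : ∀ c : ZMod 17, c ≠ 0 → ∀ r < 4, 2 * r ≤ ∑ j ∈ range r, wt17 (3 ^ j * c) + 1 := by
    decide
  simpa only [mWt_eq_wt17, map_mul, map_pow, map_ofNat] using
    h _ (equivZMod17.map_ne_zero_iff.mpr hc) r hr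

theorem exists_mWtVec_smul_le_two_mul {n : ℕ} (v : Fin n → 𝔽) :
    ∃ l : 𝔽, l ≠ 0 ∧ mWtVec _ (l • v) ≤ 2 * n := by
  obtain ⟨j, -, hj⟩ := exists_mem_card_mul_sum_le (mWt _) (s := range 4) ⟨0, by simp⟩
    (fun j => (3 : 𝔽) ^ j) sum_mWt_three_pow_mul_le v
  refine ⟨3 ^ j, three_pow_ne_zero j, ?_⟩
  rw [card_range, Fintype.card_fin] at hj
  simp only [mWtVec, Pi.smul_apply, smul_eq_mul]
  omega

theorem dPi1_le_two_mul (n : ℕ) : dPi1 ⟨1, 4⟩ n ≤ 2 * n :=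
  dPi1_le exists_mWtVec_smul_le_two_mul

theorem two_mul_sub_one_le_dPi1 (n : ℕ) : 2 * n - 1 ≤ dPi1 ⟨1, 4⟩ n := by
  obtain ⟨q, r, hr, rfl⟩ : ∃ q r, r < 4 ∧ n = 4 * q + r :=
    ⟨n / 4, n % 4, Nat.mod_lt n (by norm_num), (Nat.div_add_mod n 4).symm⟩
  rcases Nat.eq_zero_or_pos (4 * q + r) with hn | hn
  · simp [hn]
  let v : Fin (4 * q + r) → 𝔽 := fun i => 3 ^ (i % 4 : ℕ)
  have hv : v ≠ 0 := Function.ne_iff.mpr ⟨⟨0, hn⟩, three_pow_ne_zero _⟩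
  refine le_dPi1 exists_mWtVec_smul_le_two_mul hv fun l hl => ?_
  have hsum : mWtVec _ (l • v) = q * 8 + ∑ j ∈ range r, mWt _ (3 ^ j * l) := by
    simp only [mWtVec, v, Pi.smul_apply, smul_eq_mul, mul_comm l]
    rw [Fin.sum_univ_eq_sum_range (fun i => mWt _ (3 ^ (i % 4) * l)),
      sum_range_mul_add_mod (fun j => mWt _ ((3 : 𝔽) ^ j * l)) 4 q hr.le,
      sum_mWt_three_pow_mul hl, smul_eq_mul]
  have hhead := two_mul_le_sum_mWt_three_pow_mul_add_one hl hr
  omega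

theorem stmt10_general (s t : ℕ) :
    8 * s + 2 * t - 1 ≤ dPi1 (⟨1, 4⟩ : GaussianInt) (4 * s + t) ∧
      dPi1 (⟨1, 4⟩ : GaussianInt) (4 * s + t) ≤ 8 * s + 2 * t := by
  have hlower := two_mul_sub_one_le_dPi1 (4 * s + t)
  have hupper := dPi1_le_two_mul (4 * s + t)
  constructor <;> omega

/-- for `π = 1 + 4i` (so `𝔽 ≅ 𝔽₁₇`) and `n = 4s + t` with `0 < t < 4`,
`8s + 2t - 1 ≤ d_π(n,1) ≤ 8s + 2t`. -/
theorem stmt10 (s t : ℕ) (ht0 : 0 < t) (ht4 : t < 4) :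
    8 * s + 2 * t - 1 ≤ dPi1 (⟨1, 4⟩ : GaussianInt) (4 * s + t) ∧
      dPi1 (⟨1, 4⟩ : GaussianInt) (4 * s + t) ≤ 8 * s + 2 * t :=
  stmt10_general s t
end
end

section
/- There do not exist positive integers p and n such that p³ = 8n² + 4n + 1. -/
open Zsqrtd GaussianInt

lemma gi_unit_pow_four (z : GaussianInt) (hz : IsUnit z) : z ^ 4 = 1 := by
  have hn : z.norm = 1 := (Zsqrtd.norm_eq_one_iff' (by norm_num) z).mpr hz
  obtain ⟨x, y⟩ := z
  rw [Zsqrtd.norm_def] at hn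
  dsimp only at hn
  have hx1 : x ≤ 1 := by nlinarith [mul_self_nonneg y, mul_self_nonneg (x-1)]
  have hx2 : -1 ≤ x := by nlinarith [mul_self_nonneg y, mul_self_nonneg (x+1)]
  have hy1 : y ≤ 1 := by nlinarith [mul_self_nonneg x, mul_self_nonneg (y-1)]
  have hy2 : -1 ≤ y := by nlinarith [mul_self_nonneg x, mul_self_nonneg (y+1)]
  interval_cases x <;> interval_cases y <;>
    first
    | (exfalso; omega)
    | (ext : 1 <;> simp [pow_succ, Zsqrtd.re_mul, Zsqrtd.im_mul])

/-- there are no positive integers `p`, `n` with `p^3 = 8n² + 4n + 1`. -/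
theorem stmt14 : ¬ ∃ p n : ℕ, 0 < p ∧ 0 < n ∧ p ^ 3 = 8 * n ^ 2 + 4 * n + 1 := by
  rintro ⟨p, n, hp, hn, h⟩
  have hodd : ¬ 2 ∣ p := by
    rintro ⟨k, rfl⟩
    have : (2*k)^3 = 8*k^3 := by ring
    omega
  have hcop1 : Nat.Coprime p (2*n+1) := by
    have key : (2*n)^2 = p^3 - (2*n+1)^2 := by
      have e1 : (2*n+1)^2 = 4*n^2+4*n+1 := by ring
      have e2 : (2*n)^2 = 4*n^2 := by ring
      omega
    have hg1 : Nat.gcd p (2*n+1) ∣ (2*n)^2 := by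
      rw [key]
      exact Nat.dvd_sub (dvd_pow (Nat.gcd_dvd_left _ _) (by norm_num))
        (dvd_pow (Nat.gcd_dvd_right _ _) (by norm_num))
    have hsc : Nat.Coprime (2*n+1) (2*n) := by simp
    have hcg : Nat.Coprime (Nat.gcd p (2*n+1)) (2*n) :=
      Nat.Coprime.coprime_dvd_left (Nat.gcd_dvd_right _ _) hsc
    exact (hcg.pow_right 2).eq_one_of_dvd hg1
  have hcopZ : IsCoprime ((p:ℤ)^3) ((4*(n:ℤ)+2)^2) := by
    have h2 : Nat.Coprime p 2 :=
      Nat.coprime_comm.mp ((Nat.Prime.coprime_iff_not_dvd Nat.prime_two).mpr hodd)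
    have hc : Nat.Coprime p (4*n+2) := by
      have e : 4*n+2 = 2*(2*n+1) := by ring
      rw [e]; exact Nat.Coprime.mul_right h2 hcop1
    have hpc : IsCoprime (p:ℤ) (4*(n:ℤ)+2) := by
      rw [Int.isCoprime_iff_gcd_eq_one,
        show (4*(n:ℤ)+2) = ((4*n+2:ℕ):ℤ) by push_cast; ring,
        Int.gcd_natCast_natCast]
      exact hc
    exact IsCoprime.pow hpc
  set b : GaussianInt := ⟨2*(n:ℤ)+1, 2*(n:ℤ)⟩ with hb
  have hz3 : (p:ℤ)^3 = 8*(n:ℤ)^2+4*n+1 := by exact_mod_cast h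
  have hnormb : b.norm = (p:ℤ)^3 := by
    rw [Zsqrtd.norm_def]; linear_combination -hz3
  have hbmul : b * star b = ((p : GaussianInt)) ^ 3 := by
    rw [← Zsqrtd.norm_eq_mul_conj, hnormb]; push_cast; ring
  have hsum : b + star b = ((4*(n:ℤ)+2 : ℤ) : GaussianInt) := by
    ext <;> simp [hb] <;> ring
  have hcopb : IsCoprime b (star b) := by
    apply isCoprime_of_irreducible_dvd
    · rintro ⟨h1, -⟩
      rw [h1] at hnormb
      simp only [Zsqrtd.norm_zero] at hnormb
      have hp0 : (p:ℤ) ≠ 0 := by positivity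
      exact (pow_ne_zero 3 hp0) hnormb.symm
    · intro z hz hz1 hz2
      have hd1 : z.norm ∣ (p:ℤ)^3 := by
        obtain ⟨w, hw⟩ := hz1
        exact ⟨w.norm, by rw [← hnormb, hw, Zsqrtd.norm_mul]⟩
      have hd2 : z.norm ∣ (4*(n:ℤ)+2)^2 := by
        have hzd : z ∣ ((4*(n:ℤ)+2 : ℤ) : GaussianInt) := hsum ▸ dvd_add hz1 hz2
        obtain ⟨w, hw⟩ := hzd
        refine ⟨w.norm, ?_⟩
        have h' := congrArg Zsqrtd.norm hw
        rw [Zsqrtd.norm_mul, Zsqrtd.norm_intCast] at h'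
        linear_combination h'
      have hzu : IsUnit z.norm := hcopZ.isUnit_of_dvd' hd1 hd2
      exact hz.not_isUnit ((Zsqrtd.isUnit_iff_norm_isUnit z).mpr hzu)
  obtain ⟨e, he⟩ := exists_associated_pow_of_mul_eq_pow' hcopb hbmul
  obtain ⟨u, hu⟩ := he
  have hu4 : ((u : GaussianInt))^4 = 1 := gi_unit_pow_four _ u.isUnit
  have hcube : ∃ c : GaussianInt, c ^ 3 = b := by
    refine ⟨e * (u : GaussianInt)^3, ?_⟩
    have hq : (e * (u : GaussianInt)^3)^3 = e^3 * (((u:GaussianInt))^4)^2 * u := by ring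
    rw [hq, hu4]; simpa using hu
  obtain ⟨⟨s, t⟩, hc⟩ := hcube
  have hre := congrArg Zsqrtd.re hc
  have him := congrArg Zsqrtd.im hc
  simp only [hb, pow_succ, pow_zero, one_mul, Zsqrtd.re_mul, Zsqrtd.im_mul] at hre him
  have key : (s + t) * (s^2 - 4*s*t + t^2) = 1 := by linear_combination hre - him
  rcases Int.eq_one_or_neg_one_of_mul_eq_one' key with ⟨h1, h2⟩ | ⟨h1, h2⟩
  · have ht : t = 1 - s := by omega
    subst ht
    have h6 : 6 * (s * (s - 1)) = 0 := by linear_combination h2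
    rcases mul_eq_zero.mp h6 with h0 | h0
    · norm_num at h0
    rcases mul_eq_zero.mp h0 with h0 | h0
    · rw [h0] at hre
      norm_num at hre
      omega
    · have hs1 : s = 1 := by omega
      rw [hs1] at hre
      norm_num at hre
      omega
  · have ht : t = -1 - s := by omega
    subst ht
    nlinarith [sq_nonneg (2*s+1)]
end

section
/- There do not exist positive integers p and n such that p⁵ = 8n² + 4n + 1. -/
/-!
Put `z = (2n + 1) + 2n i`, so that `z * star z = 8n² + 4n + 1 = p⁵`. A common divisor of `z` and
`star z` divides `2 Re z` and `2 Im z`, hence `2` (as `Re z - Im z = 1`), and the odd number `p⁵`,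
so `z` and `star z` are coprime in the principal ideal domain `ℤ[i]` and `z` is a unit times a
fifth power. Units of `ℤ[i]` are fourth roots of unity, so `z = c⁵` itself. Writing `c = a + b i`,
the real part minus the imaginary part of `c⁵` is `(a - b)((a - b)⁴ - 20a²b²) = 1`, which
forces `c ∈ {1, -i}` and hence `n = 0`.
-/

open Zsqrtd

local notation "ℤ[i]" => GaussianInt

namespace GaussianInt

theorem pow_four_eq_one_of_isUnit {u : ℤ[i]} (hu : IsUnit u) : u ^ 4 = 1 := by
  obtain ⟨a, b⟩ := u
  have hnorm : a * a + b * b = 1 := by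
    simpa [Zsqrtd.norm_def] using (norm_eq_one_iff' (by norm_num) _).mpr hu
  obtain ⟨ha₁, ha₂⟩ : -1 ≤ a ∧ a ≤ 1 := by constructor <;> nlinarith
  obtain ⟨hb₁, hb₂⟩ : -1 ≤ b ∧ b ≤ 1 := by constructor <;> nlinarith
  interval_cases a <;> interval_cases b <;> first | omega | rfl

theorem exists_pow_five_eq_of_associated {d z : ℤ[i]} (h : Associated (d ^ 5) z) :
    ∃ c, c ^ 5 = z := by
  obtain ⟨u, rfl⟩ := h
  refine ⟨d * u, ?_⟩
  calc (d * u) ^ 5 = d ^ 5 * u * (u : ℤ[i]) ^ 4 := by ring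
    _ = d ^ 5 * u := by rw [pow_four_eq_one_of_isUnit u.isUnit, mul_one]

theorem isCoprime_star {z : ℤ[i]} (hz : IsCoprime z.re z.im) (hnorm : Odd z.norm) :
    IsCoprime z (star z) := by
  obtain ⟨x, y⟩ := z
  obtain ⟨s, t, hst⟩ := hz
  obtain ⟨k, hk⟩ := hnorm
  rw [Zsqrtd.norm_def] at hk
  dsimp only at hst hk
  -- `1 = z * star z - 2 * k * (s * x + t * y)`, with `2 * x = z + star z` and `2 * y * i = z - star z`
  refine ⟨⟨x - k * s, -y + k * t⟩, ⟨-(k * s), -(k * t)⟩, ?_⟩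
  ext <;> simp only [star_mk, re_add, re_mul, im_add, im_mul, re_one, im_one]
  · linear_combination hk - 2 * k * hst
  · ring

theorem eq_zero_or_eq_neg_one_of_pow_five_eq {z : ℤ[i]} {m : ℤ} (h : z ^ 5 = ⟨m + 1, m⟩) :
    m = 0 ∨ m = -1 := by
  obtain ⟨a, b⟩ := z
  have hre : a ^ 5 - 10 * a ^ 3 * b ^ 2 + 5 * a * b ^ 4 = m + 1 := by
    have := congrArg Zsqrtd.re h
    simp only [pow_succ, pow_zero, one_mul, re_mul, im_mul] at this
    linear_combination this
  have him : 5 * a ^ 4 * b - 10 * a ^ 2 * b ^ 3 + b ^ 5 = m := by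
    have := congrArg Zsqrtd.im h
    simp only [pow_succ, pow_zero, one_mul, re_mul, im_mul] at this
    linear_combination this
  have key : (a - b) * ((a - b) ^ 4 - 20 * a ^ 2 * b ^ 2) = 1 := by
    linear_combination hre - him
  rcases Int.eq_one_or_neg_one_of_mul_eq_one key with hab | hab
  · obtain rfl : b = a - 1 := by omega
    have : a * (a - 1) = 0 := by nlinarith
    rcases mul_eq_zero.mp this with rfl | ha
    · right; linear_combination -him
    · obtain rfl : a = 1 := by omega
      left; linear_combination -him
  · have : (20 : ℤ) ∣ 2 := ⟨(a * b) ^ 2, by rw [hab] at key; linear_combination -key⟩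
    norm_num at this

end GaussianInt

/-- there are no positive integers `p`, `n` with `p^5 = 8n² + 4n + 1`. -/
theorem stmt16 : ¬ ∃ p n : ℕ, 0 < p ∧ 0 < n ∧ p ^ 5 = 8 * n ^ 2 + 4 * n + 1 := by
  rintro ⟨p, n, -, hn, h⟩
  have hp : (p : ℤ) ^ 5 = 2 * (4 * n ^ 2 + 2 * n) + 1 := by
    rw [← Nat.cast_pow, h]; push_cast; ring
  set z : ℤ[i] := ⟨2 * n + 1, 2 * n⟩
  have hnorm : z.norm = (p : ℤ) ^ 5 := by
    rw [Zsqrtd.norm_def, hp]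
    ring
  have hcop : IsCoprime z (star z) :=
    GaussianInt.isCoprime_star ⟨1, -1, by ring⟩ (hnorm ▸ hp ▸ odd_two_mul_add_one _)
  obtain ⟨d, hd⟩ := exists_associated_pow_of_mul_eq_pow' hcop
    (by rw [← norm_eq_mul_conj, hnorm, Int.cast_pow, Int.cast_natCast])
  obtain ⟨c, hc⟩ := GaussianInt.exists_pow_five_eq_of_associated hd
  have := GaussianInt.eq_zero_or_eq_neg_one_of_pow_five_eq hc
  omega
end
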